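/- arXiv:1601.04507 — 5 statements merged into one kernel-verified Lean document; each statement's English description precedes it below -/
import Mathlib

section
/- Let C ⊆ Z_{p^r}^n be a linear block code with p-dimension k. Then d(C) ≤ n − ⌈k/r⌉ + 1. -/
/-!
Let `S` be the set of `A_p`-combinations `∑ aᵢ • vᵢ` (`aᵢ ∈ {0, …, p-1}`) of a `p`-basis.
Since `p • vᵢ` is a combination of the later vectors, two combinations can be added digit by
digit with carries, so `S` is closed under addition and hence an additive subgroup.
`p`-independence then makes `a ↦ ∑ aᵢ • vᵢ` injective: `C` contains `p ^ k` distinct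
combinations. With `t = ⌊(k - 1) / r⌋` we have `(p ^ r) ^ t < p ^ k`, so two of them agree on
the first `t` coordinates, and their difference is a nonzero codeword of weight at most
`n - t ≤ n - ⌈k / r⌉ + 1`.
-/

/-- `(v_1, ..., v_k)` is a `p`-basis of the `Z_{p^r}`-submodule `M` of `Z_{p^r}^n`:
the `v_i` lie in `M` and `A_p`-span `M`, form a `p`-generator sequence
(`p • v_i` is an `A_p`-linear combination of `v_{i+1}, ..., v_k`, and `p • v_k = 0`),
and are `p`-linearly independent, where `A_p = {0, 1, ..., p-1} ⊂ Z_{p^r}`. -/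
def IsPBasis (p r n k : ℕ) (v : Fin k → (Fin n → ZMod (p ^ r)))
    (M : Submodule (ZMod (p ^ r)) (Fin n → ZMod (p ^ r))) : Prop :=
  (∀ i, v i ∈ M) ∧
  (∀ x ∈ M, ∃ a : Fin k → ℕ, (∀ i, a i < p) ∧ x = ∑ i, (a i : ZMod (p ^ r)) • v i) ∧
  (∀ i : Fin k, ∃ a : Fin k → ℕ, (∀ j, a j < p) ∧ (∀ j : Fin k, (j : ℕ) ≤ (i : ℕ) → a j = 0) ∧
    (p : ZMod (p ^ r)) • v i = ∑ j, (a j : ZMod (p ^ r)) • v j) ∧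
  (∀ a : Fin k → ℕ, (∀ i, a i < p) → ∑ i, (a i : ZMod (p ^ r)) • v i = 0 → ∀ i, a i = 0)

open Finset

theorem exists_ne_hammingDist_le_sub {X A : Type*} [Fintype X] [Fintype A] [DecidableEq A]
    {n t : ℕ} (f : X → Fin n → A) (ht : t ≤ n) (hcard : Fintype.card A ^ t < Fintype.card X) :
    ∃ x y, x ≠ y ∧ hammingDist (f x) (f y) ≤ n - t := by
  obtain ⟨x, y, hxy, hprefix⟩ := Fintype.exists_ne_map_eq_of_card_lt
    (fun x (i : Fin t) => f x (Fin.castLE ht i)) (by simpa using hcard)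
  refine ⟨x, y, hxy, ?_⟩
  have hsupport :
      ({i | f x i ≠ f y i} : Finset (Fin n)) ⊆ ({i | ¬ (i : ℕ) < t} : Finset (Fin n)) := by
    intro i
    simp only [mem_filter, mem_univ, true_and, not_lt]
    contrapose!
    exact fun hi => congrFun hprefix ⟨i, hi⟩
  calc hammingDist (f x) (f y) ≤ #{i : Fin n | ¬ (i : ℕ) < t} := card_le_card hsupport
    _ = n - t := by
      rw [filter_not, card_sdiff_of_subset (filter_subset _ _), Fin.card_filter_val_lt,
        card_univ, Fintype.card_fin, min_eq_right ht]

section AddCommMonoid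

variable {M : Type*} [AddCommMonoid M] {p k : ℕ}

/-- An `A_p`-linear combination; the digits in `A_p = {0, …, p-1}` are encoded as `Fin p`. -/
def apComb (v : Fin k → M) (a : Fin k → Fin p) : M :=
  ∑ i, (a i : ℕ) • v i

def IsPGenerating (p : ℕ) (v : Fin k → M) : Prop :=
  ∀ i, ∃ a : Fin k → Fin p, (∀ j ≤ i, (a j : ℕ) = 0) ∧ p • v i = apComb v a

def IsPIndependent (p : ℕ) [NeZero p] (v : Fin k → M) : Prop :=
  ∀ a : Fin k → Fin p, apComb v a = 0 → a = 0

theorem apComb_mem {S : Type*} [SetLike S M] [AddSubmonoidClass S M] {s : S} {v : Fin k → M}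
    (hv : ∀ i, v i ∈ s) (a : Fin k → Fin p) : apComb v a ∈ s :=
  sum_mem fun i _ => nsmul_mem (hv i) _

theorem apComb_cons (v : Fin (k + 1) → M) (c : Fin p) (a : Fin k → Fin p) :
    apComb v (Fin.cons c a) = (c : ℕ) • v 0 + apComb (Fin.tail v) a := by
  simp only [apComb, Fin.sum_univ_succ, Fin.cons_zero, Fin.cons_succ, Fin.tail]

theorem mem_range_apComb_succ {v : Fin (k + 1) → M} {x : M} :
    x ∈ Set.range (apComb (p := p) v) ↔
      ∃ c : Fin p, ∃ y ∈ Set.range (apComb (p := p) (Fin.tail v)), (c : ℕ) • v 0 + y = x := by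
  constructor
  · rintro ⟨a, rfl⟩
    rw [← Fin.cons_self_tail a, apComb_cons]
    exact ⟨a 0, _, ⟨_, rfl⟩, rfl⟩
  · rintro ⟨c, _, ⟨a, rfl⟩, rfl⟩
    exact ⟨Fin.cons c a, apComb_cons v c a⟩

theorem IsPGenerating.tail {v : Fin (k + 1) → M} (hv : IsPGenerating p v) :
    IsPGenerating p (Fin.tail v) := by
  intro i
  obtain ⟨a, ha, hpv⟩ := hv i.succ
  refine ⟨Fin.tail a, fun j hj => ha j.succ (Fin.succ_le_succ_iff.2 hj), ?_⟩
  rwa [← Fin.cons_self_tail a, apComb_cons, ha 0 (Fin.zero_le _), zero_smul, zero_add] at hpv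

theorem IsPGenerating.nsmul_head_mem {v : Fin (k + 1) → M} (hv : IsPGenerating p v) :
    p • v 0 ∈ Set.range (apComb (p := p) (Fin.tail v)) := by
  obtain ⟨a, ha, hpv⟩ := hv 0
  rw [hpv, ← Fin.cons_self_tail a, apComb_cons, ha 0 le_rfl, zero_smul, zero_add]
  exact ⟨_, rfl⟩

/-- Adding digit by digit, a carry `p • v 0` at the head is absorbed into the tail. -/
theorem IsPGenerating.add_mem {v : Fin k → M} (hv : IsPGenerating p v) {x y : M}
    (hx : x ∈ Set.range (apComb (p := p) v)) (hy : y ∈ Set.range (apComb (p := p) v)) :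
    x + y ∈ Set.range (apComb (p := p) v) := by
  induction k generalizing x y with
  | zero =>
    obtain ⟨a, rfl⟩ := hx
    obtain ⟨b, rfl⟩ := hy
    exact ⟨a, by simp [apComb]⟩
  | succ k ih =>
    obtain ⟨c, x', hx', rfl⟩ := mem_range_apComb_succ.1 hx
    obtain ⟨d, y', hy', rfl⟩ := mem_range_apComb_succ.1 hy
    have hc := c.isLt
    have hd := d.isLt
    refine mem_range_apComb_succ.2 ?_
    by_cases hcd : (c : ℕ) + d < p
    · refine ⟨⟨c + d, hcd⟩, x' + y', ih hv.tail hx' hy', ?_⟩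
      simp only [add_nsmul]
      abel
    · refine ⟨⟨c + d - p, by omega⟩, p • v 0 + x' + y',
        ih hv.tail (ih hv.tail hv.nsmul_head_mem hx') hy', ?_⟩
      rw [← add_assoc, ← add_assoc, ← add_nsmul, Nat.sub_add_cancel (by omega), add_nsmul]
      abel

def IsPGenerating.addSubmonoid [NeZero p] {v : Fin k → M} (hv : IsPGenerating p v) :
    AddSubmonoid M where
  carrier := Set.range (apComb (p := p) v)
  add_mem' := hv.add_mem
  zero_mem' := ⟨0, by simp [apComb]⟩

theorem IsPIndependent.tail [NeZero p] {v : Fin (k + 1) → M} (hv : IsPIndependent p v) :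
    IsPIndependent p (Fin.tail v) := by
  intro a ha
  have := hv (Fin.cons 0 a) (by rw [apComb_cons, ha, Fin.val_zero, zero_smul, add_zero])
  funext i
  simpa using congrFun this i.succ

end AddCommMonoid

section AddCommGroup

variable {M : Type*} [AddCommGroup M] {p k : ℕ} [NeZero p]

theorem IsPGenerating.sub_mem [Finite M] {v : Fin k → M} (hv : IsPGenerating p v) {x y : M}
    (hx : x ∈ Set.range (apComb (p := p) v)) (hy : y ∈ Set.range (apComb (p := p) v)) :
    x - y ∈ Set.range (apComb (p := p) v) := by
  have hneg : -y ∈ hv.addSubmonoid :=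
    AddSubmonoid.multiples_le.2 (show y ∈ hv.addSubmonoid from hy)
      ((isOfFinAddOrder_of_finite y).mem_multiples_iff_mem_zmultiples.2
        (neg_mem (AddSubgroup.mem_zmultiples y)))
  exact sub_eq_add_neg x y ▸ hv.add_mem hx hneg

/-- If two `A_p`-combinations first differ at the head, their difference
`s • v 0 + (tail combination)` with `0 < s < p` would be a nontrivial `A_p`-relation. -/
theorem IsPGenerating.apComb_injective [Finite M] {v : Fin k → M} (hgen : IsPGenerating p v)
    (hind : IsPIndependent p v) : Function.Injective (apComb (p := p) v) := by
  induction k with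
  | zero => exact Function.injective_of_subsingleton _
  | succ k ih =>
    intro a b hab
    rw [← Fin.cons_self_tail a, ← Fin.cons_self_tail b] at hab ⊢
    rw [apComb_cons, apComb_cons] at hab
    by_cases hhead : a 0 = b 0
    · rw [hhead, add_right_inj] at hab
      rw [hhead, ih hgen.tail hind.tail hab]
    exfalso
    wlog hlt : (a 0 : ℕ) < b 0 generalizing a b
    · exact this hab.symm (Ne.symm hhead)
        (lt_of_le_of_ne (not_lt.1 hlt) (Fin.val_injective.ne (Ne.symm hhead)))
    obtain ⟨z, hz⟩ := hgen.tail.sub_mem ⟨Fin.tail b, rfl⟩ ⟨Fin.tail a, rfl⟩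
    set s : Fin p := ⟨b 0 - a 0, by omega⟩
    have hb : (b 0 : ℕ) • v 0 = (s : ℕ) • v 0 + (a 0 : ℕ) • v 0 := by
      rw [← add_nsmul, Nat.sub_add_cancel hlt.le]
    rw [hb, add_comm ((s : ℕ) • v 0), add_assoc, add_right_inj] at hab
    have hrel := hind (Fin.cons s z) (by rw [apComb_cons, hz, hab]; abel)
    have := congrArg Fin.val (congrFun hrel 0)
    simp only [Fin.cons_zero, Pi.zero_apply, Fin.val_zero, s] at this
    omega

end AddCommGroup

namespace IsPBasis

variable {p r n k : ℕ} {v : Fin k → (Fin n → ZMod (p ^ r))}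
  {C : Submodule (ZMod (p ^ r)) (Fin n → ZMod (p ^ r))}

theorem isPGenerating (hv : IsPBasis p r n k v C) : IsPGenerating p v := by
  intro i
  obtain ⟨a, ha, ha0, hpv⟩ := hv.2.2.1 i
  refine ⟨fun j => ⟨a j, ha j⟩, ha0, ?_⟩
  simpa only [apComb, Nat.cast_smul_eq_nsmul] using hpv

theorem isPIndependent [NeZero p] (hv : IsPBasis p r n k v C) : IsPIndependent p v := by
  intro a ha
  funext i
  refine Fin.ext (hv.2.2.2 (fun j => a j) (fun j => (a j).isLt) ?_ i)
  simpa only [apComb, Nat.cast_smul_eq_nsmul] using ha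

end IsPBasis

theorem Int.ceil_natCast_div_le {α : Type*} [Field α] [LinearOrder α] [IsStrictOrderedRing α]
    [FloorRing α] (k : ℕ) {r : ℕ} (hr : 0 < r) : ⌈(k : α) / r⌉ ≤ ((k - 1) / r : ℕ) + 1 := by
  rw [Int.ceil_le, div_le_iff₀ (by exact_mod_cast hr)]
  have hk : k ≤ ((k - 1) / r + 1) * r := by
    have := Nat.lt_mul_div_succ (k - 1) hr
    rw [mul_comm]
    omega
  exact_mod_cast hk

/-- Singleton bound in terms of the `p`-dimension (Corollary 2.1): a linear block code
`C ⊆ Z_{p^r}^n` of `p`-dimension `k` satisfies `d(C) ≤ n - ⌈k/r⌉ + 1`, i.e. it contains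
a nonzero codeword of Hamming weight at most `n - ⌈k/r⌉ + 1`. -/
theorem block_code_singleton_pdim (p r n k : ℕ) (hp : p.Prime) (hr : 0 < r) (hk : 0 < k)
    (C : Submodule (ZMod (p ^ r)) (Fin n → ZMod (p ^ r)))
    (v : Fin k → (Fin n → ZMod (p ^ r))) (hv : IsPBasis p r n k v C) :
    ∃ w ∈ C, w ≠ 0 ∧ (hammingNorm w : ℤ) ≤ (n : ℤ) - ⌈(k : ℚ) / r⌉ + 1 := by
  have : NeZero p := ⟨hp.ne_zero⟩
  have hinj := hv.isPGenerating.apComb_injective hv.isPIndependent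
  set t := (k - 1) / r
  have hrt : r * t < k := (Nat.mul_div_le (k - 1) r).trans_lt (by omega)
  have hcard : Fintype.card (ZMod (p ^ r)) ^ t < Fintype.card (Fin k → Fin p) := by
    simp only [ZMod.card, Fintype.card_fun, Fintype.card_fin, ← pow_mul]
    exact Nat.pow_lt_pow_right hp.one_lt hrt
  have htn : t ≤ n := by
    have hkn := Fintype.card_le_of_injective _ hinj
    simp only [ZMod.card, Fintype.card_fun, Fintype.card_fin, ← pow_mul] at hkn
    have := (Nat.pow_le_pow_iff_right hp.one_lt).1 hkn
    exact (Nat.lt_of_mul_lt_mul_left (hrt.trans_le this)).le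
  obtain ⟨a, b, hab, hdist⟩ := exists_ne_hammingDist_le_sub (apComb v) htn hcard
  refine ⟨apComb v a - apComb v b, sub_mem (apComb_mem hv.1 a) (apComb_mem hv.1 b),
    sub_ne_zero.2 (hinj.ne hab), ?_⟩
  rw [← neg_add_eq_sub, ← hammingDist_eq_hammingNorm, hammingDist_comm]
  have := Int.ceil_natCast_div_le (α := ℚ) k hr
  omega
end

section
/- Let (v_1, ..., v_k) be a p-basis of a Z_{p^r}-submodule M of Z_{p^r}^n, and suppose p·v_i is an A_p-linear combination of v_j, v_{j+1}, ..., v_k for some j > i. Then the reordered tuple (v_1, ..., v_{i-1}, v_{i+1}, ..., v_{j-1}, v_i, v_j, ..., v_k) is also a p-basis of M. -/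
theorem IsPBasis.comp_perm {p r n k : ℕ} {v : Fin k → (Fin n → ZMod (p ^ r))}
    {M : Submodule (ZMod (p ^ r)) (Fin n → ZMod (p ^ r))} (hv : IsPBasis p r n k v M)
    (σ : Equiv.Perm (Fin k))
    (hstep : ∀ t : Fin k, ∃ a : Fin k → ℕ, (∀ s, a s < p) ∧
      (∀ s : Fin k, (s : ℕ) ≤ (t : ℕ) → a (σ s) = 0) ∧
      (p : ZMod (p ^ r)) • v (σ t) = ∑ s, (a s : ZMod (p ^ r)) • v s) :
    IsPBasis p r n k (v ∘ σ) M := by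
  obtain ⟨hmem, hspan, -, hind⟩ := hv
  refine ⟨fun t => hmem (σ t), fun x hx => ?_, fun t => ?_, fun c hc hc0 t => ?_⟩
  · obtain ⟨a, ha, rfl⟩ := hspan x hx
    exact ⟨a ∘ σ, fun s => ha _, (Equiv.sum_comp σ fun s => (a s : ZMod (p ^ r)) • v s).symm⟩
  · obtain ⟨a, ha, hzero, hpa⟩ := hstep t
    exact ⟨a ∘ σ, fun s => ha _, hzero, hpa.trans (Equiv.sum_comp σ _).symm⟩
  · have hsum : ∑ s, (c (σ.symm s) : ZMod (p ^ r)) • v s = 0 := by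
      rw [← Equiv.sum_comp σ]
      simpa using hc0
    simpa using hind (c ∘ σ.symm) (fun s => hc _) hsum (σ t)

/-- The old position of the entry at position `t` once the entry at position `i` has been moved
to just before position `j`. -/
def moveBefore (i j t : ℕ) : ℕ :=
  if t < i then t else if t + 1 < j then t + 1 else if t + 1 = j then i else t

theorem moveBefore_injective (i j : ℕ) : Function.Injective (moveBefore i j) := by
  intro s t hst
  unfold moveBefore at hst
  split_ifs at hst <;> omega

theorem moveBefore_lt {i j t k : ℕ} (hi : i < k) (hj : j ≤ k) (ht : t < k) :
    moveBefore i j t < k := by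
  unfold moveBefore
  split_ifs <;> omega

theorem moveBefore_lt_of_lt {i j s : ℕ} (hs : s < j) : moveBefore i j s < j := by
  unfold moveBefore
  split_ifs <;> omega

theorem moveBefore_of_succ_eq {i j t : ℕ} (hit : i ≤ t) (htj : t + 1 = j) :
    moveBefore i j t = i := by
  unfold moveBefore
  split_ifs <;> omega

theorem moveBefore_le_moveBefore {i j s t : ℕ} (hst : s ≤ t) (ht : ¬(i ≤ t ∧ t + 1 = j)) :
    moveBefore i j s ≤ moveBefore i j t := by
  unfold moveBefore
  split_ifs <;> omega

noncomputable def moveBeforePerm {k : ℕ} (i : Fin k) (j : ℕ) (hj : j ≤ k) : Equiv.Perm (Fin k) :=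
  Equiv.ofBijective (fun t => ⟨moveBefore i j t, moveBefore_lt i.isLt hj t.isLt⟩)
    (Finite.injective_iff_bijective.mp fun _ _ hst =>
      Fin.ext (moveBefore_injective i j (Fin.mk.inj hst)))

@[simp]
theorem moveBeforePerm_val {k : ℕ} (i : Fin k) (j : ℕ) (hj : j ≤ k) (t : Fin k) :
    (moveBeforePerm i j hj t : ℕ) = moveBefore i j t :=
  rfl

/-- Lemma 2.1(2): if `p • v_i` is an `A_p`-linear combination of `v_j, ..., v_k` for some
`j > i`, then moving `v_i` to just before position `j` (i.e. the reordered tuple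
`(v_1, ..., v_{i-1}, v_{i+1}, ..., v_{j-1}, v_i, v_j, ..., v_k)`) again gives a
`p`-basis of `M`. -/
theorem pbasis_reorder (p r n k : ℕ)
    (M : Submodule (ZMod (p ^ r)) (Fin n → ZMod (p ^ r)))
    (v : Fin k → (Fin n → ZMod (p ^ r))) (hv : IsPBasis p r n k v M)
    (i : Fin k) (j : ℕ) (hjk : j ≤ k)
    (h : ∃ a : Fin k → ℕ, (∀ t, a t < p) ∧ (∀ t : Fin k, (t : ℕ) < j → a t = 0) ∧
      (p : ZMod (p ^ r)) • v i = ∑ t, (a t : ZMod (p ^ r)) • v t) :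
    IsPBasis p r n k
      (fun t : Fin k =>
        if (t : ℕ) < (i : ℕ) then v t
        else if h2 : (t : ℕ) + 1 < j then v ⟨(t : ℕ) + 1, by omega⟩
        else if (t : ℕ) + 1 = j then v i
        else v t) M := by
  set σ := moveBeforePerm i j hjk
  have hreorder : (fun t : Fin k =>
      if (t : ℕ) < (i : ℕ) then v t
      else if h2 : (t : ℕ) + 1 < j then v ⟨(t : ℕ) + 1, by omega⟩
      else if (t : ℕ) + 1 = j then v i
      else v t) = v ∘ σ := by
    funext t
    simp only [Function.comp_apply]
    split_ifs <;> congr 1 <;> apply Fin.ext <;>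
      simp only [σ, moveBeforePerm_val, moveBefore] <;> split_ifs <;> omega
  rw [hreorder]
  refine hv.comp_perm σ fun t => ?_
  by_cases hmoved : (i : ℕ) ≤ t ∧ (t : ℕ) + 1 = j
  · obtain ⟨a, ha, hzero, hpa⟩ := h
    have hσt : σ t = i := Fin.ext (moveBefore_of_succ_eq hmoved.1 hmoved.2)
    exact ⟨a, ha, fun s hs => hzero _ (moveBefore_lt_of_lt (by omega)), hσt ▸ hpa⟩
  · obtain ⟨b, hb, hzero, hpb⟩ := hv.2.2.1 (σ t)
    exact ⟨b, hb, fun s hs => hzero _ (moveBefore_le_moveBefore hs hmoved), hpb⟩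
end

section
/- If (v_1(D), ..., v_k(D)) is a p-generator sequence of polynomial vectors in Z_{p^r}[D]^n, then the set of all A_p[D]-linear combinations of v_1(D), ..., v_k(D) equals the Z_{p^r}[D]-submodule generated by v_1(D), ..., v_k(D); in particular the p-span is a Z_{p^r}[D]-submodule of Z_{p^r}[D]^n. -/
/-- `a ∈ A_p[D]`: every coefficient of the polynomial `a` over `Z_{p^r}` lies in
`A_p = {0, 1, ..., p-1}`. -/
def ApPoly (p r : ℕ) (a : Polynomial (ZMod (p ^ r))) : Prop :=
  ∀ m : ℕ, ∃ c < p, a.coeff m = (c : ZMod (p ^ r))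

/-- `(v_1(D), ..., v_k(D))` is a `p`-generator sequence: `p • v_i(D)` is an
`A_p[D]`-linear combination of `v_{i+1}(D), ..., v_k(D)` and `p • v_k(D) = 0`. -/
def PGenSeqPoly (p r n k : ℕ) (v : Fin k → (Fin n → Polynomial (ZMod (p ^ r)))) : Prop :=
  ∀ i : Fin k, ∃ a : Fin k → Polynomial (ZMod (p ^ r)), (∀ j, ApPoly p r (a j)) ∧
    (∀ j : Fin k, (j : ℕ) ≤ (i : ℕ) → a j = 0) ∧
    (p : Polynomial (ZMod (p ^ r))) • v i = ∑ j, a j • v j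

/-!
Every `f ∈ Z_{p^r}[D]` can be written `f = s + q p` with `s ∈ A_p[D]`, so for any `w` one has
`f w = s w + q (p w)`. If `p w` already lies in a submodule `N`, the `A_p[D]`-multiples of `w`
plus `N` therefore exhaust `span {w} ⊔ N`. Peeling off `v_1(D)` and inducting on `k`, with `N` the
span of `v_2(D), …, v_k(D)`, the `p`-span is the span.
-/

open Polynomial Submodule

def spanWithCoeffsIn {R M : Type*} [Semiring R] [AddCommMonoid M] [Module R M] (S : Set R)
    {k : ℕ} (v : Fin k → M) : Set M :=
  {x | ∃ a : Fin k → R, (∀ j, a j ∈ S) ∧ x = ∑ j, a j • v j}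

section SpanWithCoeffsIn

variable {R M : Type*} [Semiring R] [AddCommMonoid M] [Module R M] {S : Set R}

theorem spanWithCoeffsIn_succ {k : ℕ} (v : Fin (k + 1) → M) :
    spanWithCoeffsIn S v =
      Set.image2 (fun s m => s • v 0 + m) S (spanWithCoeffsIn S (Fin.tail v)) := by
  ext x
  constructor
  · rintro ⟨a, ha, rfl⟩
    exact ⟨a 0, ha 0, _, ⟨Fin.tail a, fun j => ha j.succ, rfl⟩,
      (Fin.sum_univ_succ fun j => a j • v j).symm⟩
  · rintro ⟨s, hs, _, ⟨b, hb, rfl⟩, rfl⟩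
    refine ⟨Fin.cons s b, Fin.cases hs hb, ?_⟩
    simp only [Fin.sum_univ_succ, Fin.cons_zero, Fin.cons_succ, Fin.tail]

theorem image2_smul_add_eq_span_singleton_sup {c : R}
    (hS : ∀ f : R, ∃ s ∈ S, ∃ q, f = s + q * c) {w : M} {N : Submodule R M} (hw : c • w ∈ N) :
    Set.image2 (fun s m => s • w + m) S N = ((R ∙ w) ⊔ N : Submodule R M) := by
  ext x
  constructor
  · rintro ⟨s, -, m, hm, rfl⟩
    exact add_mem (mem_sup_left (smul_mem _ s (mem_span_singleton_self w))) (mem_sup_right hm)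
  · intro hx
    obtain ⟨_, hy, m, hm, rfl⟩ := mem_sup.mp hx
    obtain ⟨f, rfl⟩ := mem_span_singleton.mp hy
    obtain ⟨s, hs, q, rfl⟩ := hS f
    refine ⟨s, hs, q • c • w + m, add_mem (smul_mem _ q hw) hm, ?_⟩
    rw [add_smul, mul_smul, add_assoc]

theorem spanWithCoeffsIn_eq_span {c : R} (hS : ∀ f : R, ∃ s ∈ S, ∃ q, f = s + q * c) :
    ∀ {k : ℕ} (v : Fin k → M), (∀ i, c • v i ∈ span R (v '' Set.Ioi i)) →
      spanWithCoeffsIn S v = span R (Set.range v)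
  | 0, v, _ => by
    ext x
    simp [spanWithCoeffsIn, Set.range_eq_empty]
  | k + 1, v, hv => by
    have htail : ∀ i, c • Fin.tail v i ∈ span R (Fin.tail v '' Set.Ioi i) := fun i => by
      have := hv i.succ
      rw [← Fin.image_succ_Ioi, Set.image_image] at this
      exact this
    have hhead : c • v 0 ∈ span R (Set.range (Fin.tail v)) := by
      refine span_mono ?_ (hv 0)
      rintro _ ⟨j, hj, rfl⟩
      exact ⟨j.pred (Fin.pos_iff_ne_zero.mp hj), congrArg v (Fin.succ_pred _ _)⟩
    rw [spanWithCoeffsIn_succ, spanWithCoeffsIn_eq_span hS _ htail,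
      image2_smul_add_eq_span_singleton_sup hS hhead, ← span_insert, ← Fin.range_cons,
      Fin.cons_self_tail]

end SpanWithCoeffsIn

theorem Polynomial.exists_eq_add_mul_C_of_coeff_mem {R : Type*} [Semiring R] {D : Set R}
    (hD : (0 : R) ∈ D) {c : R} (h : ∀ a : R, ∃ d ∈ D, ∃ q, a = d + q * c) (f : R[X]) :
    ∃ s q : R[X], (∀ m, s.coeff m ∈ D) ∧ f = s + q * C c := by
  choose d hd q hq using h
  let n := f.natDegree + 1
  refine ⟨∑ m ∈ Finset.range n, monomial m (d (f.coeff m)),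
    ∑ m ∈ Finset.range n, monomial m (q (f.coeff m)), fun m => ?_, ?_⟩
  · simp only [finsetSum_coeff, coeff_monomial, Finset.sum_ite_eq']
    split_ifs
    exacts [hd _, hD]
  · conv_lhs => rw [f.as_sum_range' n (Nat.lt_succ_self _)]
    simp only [Finset.sum_mul, monomial_mul_C, ← Finset.sum_add_distrib, ← map_add, ← hq]

theorem ZMod.exists_eq_natCast_add_mul {p r : ℕ} (hp : 0 < p) (a : ZMod (p ^ r)) :
    ∃ d ∈ {x : ZMod (p ^ r) | ∃ c < p, x = c}, ∃ q, a = d + q * p := by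
  have : NeZero (p ^ r) := ⟨pow_ne_zero r hp.ne'⟩
  refine ⟨(a.val % p : ℕ), ⟨_, Nat.mod_lt _ hp, rfl⟩, (a.val / p : ℕ), ?_⟩
  rw [← Nat.cast_mul, ← Nat.cast_add, Nat.mod_add_div', ZMod.natCast_zmod_val]

theorem pspan_eq_span_general (p r n k : ℕ) (hp : p.Prime)
    (v : Fin k → (Fin n → Polynomial (ZMod (p ^ r)))) (hv : PGenSeqPoly p r n k v) :
    {x : Fin n → Polynomial (ZMod (p ^ r)) |
        ∃ a : Fin k → Polynomial (ZMod (p ^ r)), (∀ j, ApPoly p r (a j)) ∧ x = ∑ j, a j • v j}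
      = (Submodule.span (Polynomial (ZMod (p ^ r))) (Set.range v) :
          Set (Fin n → Polynomial (ZMod (p ^ r)))) := by
  have hdigits (f : Polynomial (ZMod (p ^ r))) : ∃ s ∈ {a | ApPoly p r a}, ∃ q, f = s + q * p := by
    obtain ⟨s, q, hs, rfl⟩ := f.exists_eq_add_mul_C_of_coeff_mem
      (show (0 : ZMod (p ^ r)) ∈ {x : ZMod (p ^ r) | ∃ c < p, x = c} from
        ⟨0, hp.pos, Nat.cast_zero.symm⟩)
      (ZMod.exists_eq_natCast_add_mul hp.pos)
    exact ⟨s, hs, q, by rw [← C_eq_natCast, map_natCast]⟩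
  refine spanWithCoeffsIn_eq_span hdigits v fun i => ?_
  obtain ⟨a, -, ha_le, heq⟩ := hv i
  rw [heq]
  refine sum_mem fun j _ => ?_
  rcases le_or_gt j i with hji | hij
  · simp [ha_le j hji]
  · exact smul_mem _ _ (subset_span ⟨j, hij, rfl⟩)

/-- If `(v_1(D), ..., v_k(D))` is a `p`-generator sequence in `Z_{p^r}[D]^n`, then its
`p`-span (the set of all `A_p[D]`-linear combinations) equals the `Z_{p^r}[D]`-submodule
generated by `v_1(D), ..., v_k(D)`. -/
theorem pspan_eq_span (p r n k : ℕ) (hp : p.Prime) (hr : 0 < r)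
    (v : Fin k → (Fin n → Polynomial (ZMod (p ^ r)))) (hv : PGenSeqPoly p r n k v) :
    {x : Fin n → Polynomial (ZMod (p ^ r)) |
        ∃ a : Fin k → Polynomial (ZMod (p ^ r)), (∀ j, ApPoly p r (a j)) ∧ x = ∑ j, a j • v j}
      = (Submodule.span (Polynomial (ZMod (p ^ r))) (Set.range v) :
          Set (Fin n → Polynomial (ZMod (p ^ r)))) :=
  pspan_eq_span_general p r n k hp v hv
end

section
/- The free distance of an (n,k,δ)-convolutional code C over Z_{p^r} satisfies d(C) ≤ n(⌊δ/k⌋+1) − ⌈(k/r)(⌊δ/k⌋+1) − δ/r⌉ + 1. -/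
/-- The weight of a polynomial vector over `Z_{p^r}`. -/
def wtPoly (p r n : ℕ) (v : Fin n → Polynomial (ZMod (p ^ r))) : ℕ :=
  ∑ m : Fin n, (v m).support.card

/-- The degree of a row: the maximum of the degrees of its entries. -/
def rowDeg {R : Type*} [Semiring R] (n : ℕ) (v : Fin n → Polynomial R) : ℕ :=
  Finset.univ.sup fun m => (v m).natDegree

/-- The leading coefficient vector of a polynomial row vector. -/
def leadCoeffVec {R : Type*} [Semiring R] (n : ℕ) (v : Fin n → Polynomial R) : Fin n → R :=
  fun m => (v m).coeff (rowDeg n v)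

/-- The rows of `g` form a `p`-basis of the convolutional code
`C ⊆ Z_{p^r}[D]^n` (a `Z_{p^r}[D]`-submodule): they lie in `C`, `A_p[D]`-span `C`,
form a `p`-generator sequence and are `p`-linearly independent over `A_p[D]`. -/
def IsPEncoder (p r n k : ℕ) (g : Fin k → (Fin n → Polynomial (ZMod (p ^ r))))
    (C : Submodule (Polynomial (ZMod (p ^ r))) (Fin n → Polynomial (ZMod (p ^ r)))) : Prop :=
  (∀ i, g i ∈ C) ∧
  (∀ x ∈ C, ∃ a : Fin k → Polynomial (ZMod (p ^ r)), (∀ i, ApPoly p r (a i)) ∧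
    x = ∑ i, a i • g i) ∧
  (∀ i : Fin k, ∃ a : Fin k → Polynomial (ZMod (p ^ r)), (∀ j, ApPoly p r (a j)) ∧
    (∀ j : Fin k, (j : ℕ) ≤ (i : ℕ) → a j = 0) ∧
    (p : Polynomial (ZMod (p ^ r))) • g i = ∑ j, a j • g j) ∧
  (∀ a : Fin k → Polynomial (ZMod (p ^ r)), (∀ i, ApPoly p r (a i)) →
    ∑ i, a i • g i = 0 → ∀ i, a i = 0)

/-!
Put `ν = ⌊δ/k⌋` and `e_i = ν + 1 - deg g_i`. The codewords `∑ u_i g_i` whose coefficients `u_i`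
have digits in `A_p` and degree `< e_i` have degree `≤ ν`, and they are pairwise distinct: if two
`A_p[D]`-representations first differ at index `i`, write `a_i - b_i = d + p q` with `d ∈ A_p[D]`;
rewriting `p g_i` through the later rows turns `∑ (a_j - b_j) g_j = 0` into an `A_p[D]`-relation
with `i`-th coefficient `d`, so `d = 0` by independence and `a_i = b_i`. There are
`p ^ ∑ e_i ≥ p ^ (k(ν+1) - δ)` such codewords, more than the `p ^ (r τ)` patterns on a fixed set
of `τ = ⌈(k(ν+1) - δ)/r⌉ - 1` of the `n(ν+1)` coefficient positions, so two of them agree there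
and their difference is a nonzero codeword of weight at most `n(ν+1) - τ`.
-/

open Polynomial Finset

structure IsDigitSet {R : Type*} [CommRing R] (π : R) (A : Set R) : Prop where
  zero_mem : 0 ∈ A
  exists_eq_add_mul : ∀ c, ∃ d ∈ A, ∃ q, c = d + π * q
  eq_of_eq_add_mul : ∀ d ∈ A, ∀ d' ∈ A, ∀ q, d = d' + π * q → d = d'

/-- The paper's `p`-generator sequence, with `p` and `A_p` replaced by `π` and `A`. -/
def IsGeneratorSeq {R M : Type*} [CommRing R] [AddCommGroup M] [Module R M] {k : ℕ}
    (π : R) (A : Set R) (g : Fin k → M) : Prop :=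
  ∀ i, ∃ f : Fin k → R, (∀ j, f j ∈ A) ∧ (∀ j, j ≤ i → f j = 0) ∧
    π • g i = Fintype.linearCombination R g f

def VanishesBelow {R : Type*} [Zero R] {k : ℕ} (t : ℕ) (a : Fin k → R) : Prop :=
  ∀ j : Fin k, (j : ℕ) < t → a j = 0

namespace VanishesBelow

variable {R : Type*} {k t : ℕ} {a : Fin k → R}

lemma zero_left [Zero R] (a : Fin k → R) : VanishesBelow 0 a :=
  fun _ h => absurd h (Nat.not_lt_zero _)

lemma eq_zero [Zero R] (ha : VanishesBelow k a) : a = 0 := funext fun j => ha j j.isLt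

lemma sub_single [AddGroup R] (ha : VanishesBelow t a) (ht : t < k) :
    VanishesBelow (t + 1) (a - Pi.single ⟨t, ht⟩ (a ⟨t, ht⟩)) := fun j hj => by
  rcases Nat.lt_succ_iff_lt_or_eq.mp hj with hj | hj
  · have : j ≠ ⟨t, ht⟩ := fun h => by simp [h] at hj
    simp [this, ha j hj]
  · obtain rfl : j = ⟨t, ht⟩ := Fin.ext hj
    simp

lemma single_add [AddZeroClass R] (ht : t < k) (d : R) (ha : VanishesBelow (t + 1) a) :
    VanishesBelow t (Pi.single ⟨t, ht⟩ d + a) := fun j hj => by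
  have : j ≠ ⟨t, ht⟩ := fun h => by simp [h] at hj
  simp [this, ha j (Nat.lt_succ_of_lt hj)]

end VanishesBelow

lemma Fintype.linearCombination_sub_single {α R M : Type*} [Fintype α] [DecidableEq α] [Ring R]
    [AddCommGroup M] [Module R M] (g : α → M) (a : α → R) (i : α) :
    Fintype.linearCombination R g (a - Pi.single i (a i)) =
      Fintype.linearCombination R g a - a i • g i := by
  simp

namespace IsDigitSet

variable {R M : Type*} [CommRing R] [AddCommGroup M] [Module R M] {π : R} {A : Set R}
  {k : ℕ} {g : Fin k → M}

local notation "L" => Fintype.linearCombination R g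

lemma single_add_mem {i : Fin k} {d : R} (hd : d ∈ A) {a : Fin k → R}
    (ha : ∀ j, a j ∈ A) (hai : a i = 0) (j : Fin k) : (Pi.single i d + a : Fin k → R) j ∈ A := by
  by_cases hj : j = i
  · subst hj; simpa [hai] using hd
  · simpa [hj] using ha j

lemma sub_single_mem (hA : IsDigitSet π A) {a : Fin k → R} (ha : ∀ j, a j ∈ A) (i j : Fin k) :
    (a - Pi.single i (a i) : Fin k → R) j ∈ A := by
  by_cases hj : j = i
  · subst hj; simpa using hA.zero_mem
  · simpa [hj] using ha j

theorem exists_digits_linearCombination_eq (hA : IsDigitSet π A) (hg : IsGeneratorSeq π A g)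
    {t : ℕ} (ht : t ≤ k) (c : Fin k → R) (hc : VanishesBelow t c) :
    ∃ a : Fin k → R, (∀ j, a j ∈ A) ∧ VanishesBelow t a ∧ L a = L c := by
  induction ht using Nat.decreasingInduction generalizing c with
  | self => exact ⟨0, fun _ => hA.zero_mem, fun _ _ => rfl, by rw [hc.eq_zero]⟩
  | of_succ t ht ih =>
    set i : Fin k := ⟨t, ht⟩
    obtain ⟨d, hd, q, hcd⟩ := hA.exists_eq_add_mul (c i)
    obtain ⟨f, -, hf0, hf⟩ := hg i
    obtain ⟨u, hu, hu0, hLu⟩ := ih (c - Pi.single i (c i) + q • f) fun j hj => by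
      rw [Pi.add_apply, hc.sub_single ht j hj, Pi.smul_apply, hf0 j (Nat.lt_succ_iff.mp hj),
        smul_zero, zero_add]
    refine ⟨Pi.single i d + u, single_add_mem hd hu (hu0 i t.lt_succ_self),
      hu0.single_add ht d, ?_⟩
    rw [map_add, hLu, map_add, Fintype.linearCombination_sub_single, map_smul, ← hf,
      Fintype.linearCombination_apply_single, hcd, smul_smul]
    module

theorem eq_of_linearCombination_eq (hA : IsDigitSet π A) (hg : IsGeneratorSeq π A g)
    (hind : ∀ a : Fin k → R, (∀ j, a j ∈ A) → L a = 0 → ∀ j, a j = 0)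
    {t : ℕ} (ht : t ≤ k) {a b : Fin k → R} (ha : ∀ j, a j ∈ A) (hb : ∀ j, b j ∈ A)
    (ha0 : VanishesBelow t a) (hb0 : VanishesBelow t b) (hab : L a = L b) : a = b := by
  induction ht using Nat.decreasingInduction generalizing a b with
  | self => rw [ha0.eq_zero, hb0.eq_zero]
  | of_succ t ht ih =>
    set i : Fin k := ⟨t, ht⟩
    obtain ⟨d, hd, q, hdq⟩ := hA.exists_eq_add_mul (a i - b i)
    obtain ⟨f, -, hf0, hf⟩ := hg i
    obtain ⟨u, -, hu0, hLu⟩ := exists_digits_linearCombination_eq hA hg ht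
      ((b - Pi.single i (b i)) - (a - Pi.single i (a i)) - q • f) fun j hj => by
        change (b - _) j - (a - _) j - q • f j = 0
        rw [hb0.sub_single ht j hj, ha0.sub_single ht j hj, hf0 j (Nat.lt_succ_iff.mp hj),
          smul_zero, sub_zero, sub_zero]
    obtain ⟨u', hu', hu'0, hLu'⟩ := exists_digits_linearCombination_eq hA hg ht (-u)
      fun j hj => by simp [hu0 j hj]
    -- `d • g i` is a combination of later rows, so independence kills the digit `d`
    have hd0 : d = 0 := by
      have hL : L (Pi.single i d + u') = 0 := by
        rw [map_add, hLu', map_neg, hLu, map_sub, map_sub, map_smul, ← hf,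
          Fintype.linearCombination_sub_single, Fintype.linearCombination_sub_single, hab,
          Fintype.linearCombination_apply_single]
        linear_combination (norm := module) (-hdq) • g i
      simpa [hu'0 i t.lt_succ_self] using
        hind _ (single_add_mem hd hu' (hu'0 i t.lt_succ_self)) hL i
    have hai : a i = b i := hA.eq_of_eq_add_mul _ (ha i) _ (hb i) q <| by
      rw [← sub_eq_iff_eq_add', hdq, hd0, zero_add]
    have htail : a - Pi.single i (a i) = b - Pi.single i (b i) :=
      ih (sub_single_mem hA ha i) (sub_single_mem hA hb i) (ha0.sub_single ht)
        (hb0.sub_single ht) <| by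
          rw [Fintype.linearCombination_sub_single, Fintype.linearCombination_sub_single, hab, hai]
    rw [← sub_add_cancel a (Pi.single i (a i)), htail, hai, sub_add_cancel]

theorem injOn_linearCombination (hA : IsDigitSet π A) (hg : IsGeneratorSeq π A g)
    (hind : ∀ a : Fin k → R, (∀ j, a j ∈ A) → L a = 0 → ∀ j, a j = 0) :
    Set.InjOn L {a | ∀ j, a j ∈ A} := fun a ha b hb hab =>
  hA.eq_of_linearCombination_eq hg hind (Nat.zero_le k) ha hb (.zero_left a) (.zero_left b) hab

end IsDigitSet

section Digits

variable {p r : ℕ}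

lemma ZMod.natCast_eq_of_eq_add_mul (hr : 0 < r) {x y : ℕ} (hx : x < p) (hy : y < p)
    {z : ZMod (p ^ r)} (h : (x : ZMod (p ^ r)) = y + p * z) : x = y := by
  have h' := congrArg (ZMod.castHom (dvd_pow_self p hr.ne') (ZMod p)) h
  simp only [map_natCast, map_add, map_mul, ZMod.natCast_self, zero_mul, add_zero] at h'
  rwa [ZMod.natCast_eq_natCast_iff', Nat.mod_eq_of_lt hx, Nat.mod_eq_of_lt hy] at h'

lemma exists_apPoly_eq_add_mul (hp : 0 < p) (c : (ZMod (p ^ r))[X]) :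
    ∃ d, ApPoly p r d ∧ ∃ q, c = d + p * q := by
  have : NeZero (p ^ r) := ⟨pow_ne_zero _ hp.ne'⟩
  set N := c.natDegree + 1
  refine ⟨ofFn N fun t => (((c.coeff t).val % p : ℕ) : ZMod (p ^ r)), fun m => ?_,
    ofFn N fun t => (((c.coeff t).val / p : ℕ) : ZMod (p ^ r)), ?_⟩
  · by_cases hm : m < N
    · exact ⟨_, Nat.mod_lt _ hp, ofFn_coeff_eq_val_of_lt _ hm⟩
    · exact ⟨0, hp, by simp [ofFn_coeff_eq_zero_of_ge _ (not_lt.mp hm)]⟩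
  · ext m
    rw [coeff_add, coeff_natCast_mul]
    by_cases hm : m < N
    · rw [ofFn_coeff_eq_val_of_lt _ hm, ofFn_coeff_eq_val_of_lt _ hm, ← Nat.cast_mul,
        ← Nat.cast_add, Nat.mod_add_div, ZMod.natCast_zmod_val]
    · rw [ofFn_coeff_eq_zero_of_ge _ (not_lt.mp hm), ofFn_coeff_eq_zero_of_ge _ (not_lt.mp hm),
        coeff_eq_zero_of_natDegree_lt (by omega), mul_zero, add_zero]

lemma isDigitSet_apPoly (hp : 0 < p) (hr : 0 < r) :
    IsDigitSet (p : (ZMod (p ^ r))[X]) {a | ApPoly p r a} where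
  zero_mem _ := ⟨0, hp, by simp⟩
  exists_eq_add_mul := exists_apPoly_eq_add_mul hp
  eq_of_eq_add_mul a ha b hb q h := by
    ext m
    obtain ⟨x, hx, hax⟩ := ha m
    obtain ⟨y, hy, hby⟩ := hb m
    have hm := congrArg (coeff · m) h
    simp only [coeff_add, coeff_natCast_mul, hax, hby] at hm
    rw [hax, hby, ZMod.natCast_eq_of_eq_add_mul hr hx hy hm]

noncomputable def digitPoly (p r e : ℕ) (ψ : Fin e → Fin p) : (ZMod (p ^ r))[X] :=
  ofFn e fun t => ((ψ t : ℕ) : ZMod (p ^ r))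

lemma apPoly_digitPoly (hp : 0 < p) {e : ℕ} (ψ : Fin e → Fin p) :
    ApPoly p r (digitPoly p r e ψ) := by
  intro m
  by_cases hm : m < e
  · exact ⟨_, (ψ _).isLt, ofFn_coeff_eq_val_of_lt _ hm⟩
  · exact ⟨0, hp, by simp [digitPoly, ofFn_coeff_eq_zero_of_ge _ (not_lt.mp hm)]⟩

lemma digitPoly_injective (hr : 0 < r) (e : ℕ) : Function.Injective (digitPoly p r e) := by
  have hcast : Function.Injective fun c : Fin p => ((c : ℕ) : ZMod (p ^ r)) := fun x y h =>
    Fin.ext <| ZMod.natCast_eq_of_eq_add_mul hr x.isLt y.isLt (z := 0) (by simpa using h)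
  exact (injective_ofFn e).comp hcast.comp_left

end Digits

lemma sum_card_support_eq_card_filter {R : Type*} [Semiring R] [DecidableEq R] {n ν : ℕ}
    (v : Fin n → R[X]) (hv : ∀ m, (v m).natDegree ≤ ν) :
    ∑ m, (v m).support.card = #{x ∈ univ ×ˢ range (ν + 1) | (v x.1).coeff x.2 ≠ 0} := by
  rw [card_filter, sum_product]
  refine sum_congr rfl fun m _ => ?_
  rw [← card_filter]
  congr 1
  ext t
  simp only [mem_support_iff, mem_filter, mem_range, iff_and_self]
  exact fun h => Nat.lt_succ_of_le ((le_natDegree_of_ne_zero h).trans (hv m))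

theorem exists_ne_sum_card_support_sub_add_le {R ι : Type*} [Ring R] [Fintype R] [Fintype ι]
    {n ν τ : ℕ} (f : ι → Fin n → R[X]) (hf : Function.Injective f)
    (hdeg : ∀ x m, (f x m).natDegree ≤ ν) (hcard : Fintype.card R ^ τ < Fintype.card ι) :
    ∃ x y, f x ≠ f y ∧ ∑ m, (f x m - f y m).support.card + τ ≤ n * (ν + 1) := by
  classical
  have hW : #((univ : Finset (Fin n)) ×ˢ range (ν + 1)) = n * (ν + 1) := by simp
  -- `T` has `min τ (n * (ν + 1))` positions; a nonzero difference then forces `τ < n * (ν + 1)`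
  obtain ⟨T, hTW, hT⟩ := exists_subset_card_eq (hW ▸ min_le_right τ (n * (ν + 1)))
  obtain ⟨x, y, hxy, hxyT⟩ := Fintype.exists_ne_map_eq_of_card_lt
    (fun x (s : T) => (f x s.1.1).coeff s.1.2) <| by
      rw [Fintype.card_fun, Fintype.card_coe, hT]
      exact (pow_le_pow_right₀ Fintype.card_pos (min_le_left _ _)).trans_lt hcard
  refine ⟨x, y, hf.ne hxy, ?_⟩
  have hdeg' m : (f x m - f y m).natDegree ≤ ν :=
    (natDegree_sub_le _ _).trans (max_le (hdeg x m) (hdeg y m))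
  have hpos : 0 < ∑ m, (f x m - f y m).support.card := by
    obtain ⟨m, hm⟩ := Function.ne_iff.mp (hf.ne hxy)
    exact sum_pos' (fun _ _ => Nat.zero_le _)
      ⟨m, mem_univ m, card_pos.mpr (support_nonempty.mpr (sub_ne_zero.mpr hm))⟩
  rw [sum_card_support_eq_card_filter _ hdeg'] at hpos ⊢
  have hle : #{s ∈ univ ×ˢ range (ν + 1) | (f x s.1 - f y s.1).coeff s.2 ≠ 0} ≤
      #(univ ×ˢ range (ν + 1) \ T) := by
    refine card_le_card fun s hs => ?_
    rw [mem_filter] at hs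
    refine mem_sdiff.mpr ⟨hs.1, fun hsT => hs.2 ?_⟩
    rw [coeff_sub, sub_eq_zero]
    exact congrFun hxyT ⟨s, hsT⟩
  rw [card_sdiff_of_subset hTW, hW, hT] at hle
  omega

section Codewords

variable {p r n k : ℕ}

noncomputable def digitCodeword (g : Fin k → Fin n → (ZMod (p ^ r))[X]) (e : Fin k → ℕ)
    (φ : (i : Fin k) → Fin (e i) → Fin p) : Fin n → (ZMod (p ^ r))[X] :=
  ∑ i, digitPoly p r (e i) (φ i) • g i

lemma digitCodeword_mem {C : Submodule (ZMod (p ^ r))[X] (Fin n → (ZMod (p ^ r))[X])}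
    {g : Fin k → Fin n → (ZMod (p ^ r))[X]} (hg : ∀ i, g i ∈ C) (e : Fin k → ℕ)
    (φ : (i : Fin k) → Fin (e i) → Fin p) : digitCodeword g e φ ∈ C :=
  C.sum_mem fun i _ => C.smul_mem _ (hg i)

lemma digitCodeword_injective (hp : 0 < p) (hr : 0 < r) {g : Fin k → Fin n → (ZMod (p ^ r))[X]}
    (hg : IsGeneratorSeq (p : (ZMod (p ^ r))[X]) {a | ApPoly p r a} g)
    (hind : ∀ a : Fin k → (ZMod (p ^ r))[X], (∀ i, ApPoly p r (a i)) →
      ∑ i, a i • g i = 0 → ∀ i, a i = 0) (e : Fin k → ℕ) :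
    Function.Injective (digitCodeword g e) := fun φ ψ h => funext fun i =>
  digitPoly_injective hr (e i) <| congrFun ((isDigitSet_apPoly hp hr).injOn_linearCombination hg
    hind (fun i => apPoly_digitPoly hp (φ i)) (fun i => apPoly_digitPoly hp (ψ i)) h) i

lemma natDegree_le_rowDeg {R : Type*} [Semiring R] (v : Fin n → R[X]) (m : Fin n) :
    (v m).natDegree ≤ rowDeg n v :=
  le_sup (f := fun m => (v m).natDegree) (mem_univ m)

lemma natDegree_digitCodeword_le (g : Fin k → Fin n → (ZMod (p ^ r))[X]) (ν : ℕ)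
    (φ : (i : Fin k) → Fin (ν + 1 - rowDeg n (g i)) → Fin p) (m : Fin n) :
    (digitCodeword g (fun i => ν + 1 - rowDeg n (g i)) φ m).natDegree ≤ ν := by
  rw [digitCodeword, Finset.sum_apply]
  refine natDegree_sum_le_of_forall_le _ _ fun i _ => ?_
  rw [Pi.smul_apply, smul_eq_mul]
  by_cases hu : digitPoly p r _ (φ i) = 0
  · simp [hu]
  have he := ne_zero_of_ofFn_ne_zero hu
  have hu_lt : (digitPoly p r _ (φ i)).natDegree < _ :=
    ofFn_natDegree_lt (Nat.one_le_iff_ne_zero.mpr he) _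
  have hg := natDegree_le_rowDeg (g i) m
  have := natDegree_mul_le (p := digitPoly p r _ (φ i)) (q := g i m)
  omega

end Codewords

lemma mul_sub_sum_le_sum_tsub {k : ℕ} (c : ℕ) (d : Fin k → ℕ) :
    k * c - ∑ i, d i ≤ ∑ i, (c - d i) := by
  have : ∑ _i : Fin k, c ≤ ∑ i, (c - d i + d i) := sum_le_sum fun i _ => le_tsub_add
  rw [sum_const, card_univ, Fintype.card_fin, smul_eq_mul, sum_add_distrib] at this
  omega

lemma ceil_div_mul_sub_div_le {r k ν δ : ℕ} (hr : 0 < r) (hδ : δ ≤ k * (ν + 1)) :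
    ⌈(k : ℚ) / r * (ν + 1) - δ / r⌉ ≤ (((k * (ν + 1) - δ - 1) / r : ℕ) : ℤ) + 1 := by
  have hr' : (0 : ℚ) < r := by exact_mod_cast hr
  have hl : (k : ℚ) / r * (ν + 1) - δ / r = ((k * (ν + 1) - δ : ℕ) : ℚ) / r := by
    rw [Nat.cast_sub hδ]
    push_cast
    ring
  rw [hl, Int.ceil_le, div_le_iff₀ hr']
  generalize k * (ν + 1) - δ = l
  have := Nat.lt_mul_div_succ (l - 1) hr
  exact_mod_cast (by rw [mul_comm _ r]; omega : l ≤ ((l - 1) / r + 1) * r)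

theorem generalized_singleton_bound_general (p r n k δ : ℕ) (hp : p.Prime) (hr : 0 < r) (hk : 0 < k)
    (C : Submodule (Polynomial (ZMod (p ^ r))) (Fin n → Polynomial (ZMod (p ^ r))))
    (g : Fin k → (Fin n → Polynomial (ZMod (p ^ r))))
    (henc : IsPEncoder p r n k g C)
    (hδ : δ = ∑ i, rowDeg n (g i)) :
    ∃ v ∈ C, v ≠ 0 ∧ (wtPoly p r n v : ℤ) ≤
      (n : ℤ) * ((δ / k : ℕ) + 1)
        - ⌈(k : ℚ) / r * ((δ / k : ℕ) + 1) - (δ : ℚ) / r⌉ + 1 := by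
  obtain ⟨hmem, -, hgen, hind⟩ := henc
  have : NeZero (p ^ r) := ⟨pow_ne_zero r hp.ne_zero⟩
  set ν := δ / k
  set e : Fin k → ℕ := fun i => ν + 1 - rowDeg n (g i)
  set τ := (k * (ν + 1) - δ - 1) / r
  have hδk : δ < k * (ν + 1) := Nat.lt_mul_div_succ δ hk
  have hδe : k * (ν + 1) - δ ≤ ∑ i, e i := hδ ▸ mul_sub_sum_le_sum_tsub _ _
  have hcard : Fintype.card (ZMod (p ^ r)) ^ τ <
      Fintype.card ((i : Fin k) → Fin (e i) → Fin p) := by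
    rw [ZMod.card, ← pow_mul, Fintype.card_pi]
    simp only [Fintype.card_fun, Fintype.card_fin, prod_pow_eq_pow_sum]
    exact Nat.pow_lt_pow_right hp.one_lt ((Nat.mul_div_le _ r).trans_lt (by omega))
  obtain ⟨φ, ψ, hne, hwt⟩ := exists_ne_sum_card_support_sub_add_le _
    (digitCodeword_injective hp.pos hr hgen hind e) (natDegree_digitCodeword_le g ν) hcard
  refine ⟨_, C.sub_mem (digitCodeword_mem hmem e φ) (digitCodeword_mem hmem e ψ),
    sub_ne_zero.mpr hne, ?_⟩
  have hceil : _ ≤ (τ : ℤ) + 1 := ceil_div_mul_sub_div_le hr hδk.le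
  zify at hwt
  simp only [wtPoly, Pi.sub_apply]
  push_cast
  linarith

/-- Generalized Singleton bound (Corollary 3.1): an `(n,k,δ)`-convolutional code `C` over
`Z_{p^r}` (with a reduced `p`-encoder `g`, i.e. the leading coefficient vectors of its
rows are `p`-linearly independent, and `p`-degree `δ`) contains a nonzero codeword of
weight at most `n(⌊δ/k⌋+1) - ⌈(k/r)(⌊δ/k⌋+1) - δ/r⌉ + 1`; hence
`d(C) ≤ n(⌊δ/k⌋+1) - ⌈(k/r)(⌊δ/k⌋+1) - δ/r⌉ + 1`. -/
theorem generalized_singleton_bound (p r n k δ : ℕ) (hp : p.Prime) (hr : 0 < r) (hk : 0 < k)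
    (C : Submodule (Polynomial (ZMod (p ^ r))) (Fin n → Polynomial (ZMod (p ^ r))))
    (g : Fin k → (Fin n → Polynomial (ZMod (p ^ r))))
    (henc : IsPEncoder p r n k g C)
    (hred : ∀ a : Fin k → ℕ, (∀ i, a i < p) →
      ∑ i, (a i : ZMod (p ^ r)) • leadCoeffVec n (g i) = 0 → ∀ i, a i = 0)
    (hδ : δ = ∑ i, rowDeg n (g i)) :
    ∃ v ∈ C, v ≠ 0 ∧ (wtPoly p r n v : ℤ) ≤
      (n : ℤ) * ((δ / k : ℕ) + 1)
        - ⌈(k : ℚ) / r * ((δ / k : ℕ) + 1) - (δ : ℚ) / r⌉ + 1 :=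
  generalized_singleton_bound_general p r n k δ hp hr hk C g henc hδ
end

section
/- Let G̃(D) ∈ Z_p[D]^{k̃×n} be lifted to Z_{p^r}[D] and let G(D) be the matrix over Z_{p^r}[D] whose rows are p^j·G̃_{k_i}(D) for blocks G̃_{k_i} of G̃ and i ≤ j ≤ r−1 (as in equation (2) of the paper). If the rows of G̃(D) all have degree ν and G̃(D) is in reduced form (its leading coefficient matrix has full row rank over Z_p), then G(D) is a p-encoder in reduced form: its rows form a p-generator sequence, are p-linearly independent, its leading coefficient vectors are p-linearly independent over Z_{p^r}, and all its row degrees equal ν. -/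
/-!
Multiply a relation `∑ a_{i,j} p^j G̃_i = 0` with digit coefficients `a_{i,j} ∈ A_p[D]` by
`p^(r-1-j)`: since `p^r = 0` every layer above `j` dies, and by induction on `j` the layers below
are already zero, so `p^(r-1) ∑_i a_{i,j} G̃_i = 0`. Hence `∑_i a_{i,j} G̃_i` vanishes mod `p`. The
reduced rows are independent over `Z_p[D]` because their degree-`ν` coefficient vectors are
(comparing top coefficients), so every `a_{i,j}` vanishes mod `p`, and a digit polynomial that
vanishes mod `p` is zero. The same argument with constant coefficients gives the independence of
the leading coefficient vectors. The generator property holds because `p · p^j G̃_i = p^(j+1) G̃_i`,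
and the row degrees are kept because `p^j c ≠ 0` in `Z_{p^r}` for a digit `0 < c < p` and `j < r`.
-/

open Polynomial

theorem Fintype.sum_dite_zero_eq_sum_subtype {α M : Type*} [Fintype α] [AddCommMonoid M]
    (P : α → Prop) [DecidablePred P] (g : Subtype P → M) :
    ∑ q, (if h : P q then g ⟨q, h⟩ else 0) = ∑ s, g s := by
  rw [← Fintype.sum_subtype_add_sum_subtype P]
  convert add_zero (∑ s, g s) using 2
  · exact Finset.sum_congr rfl fun s _ => dif_pos s.2
  · exact Finset.sum_eq_zero fun i _ => dif_neg i.2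

section Layers

variable {ι A M : Type*} [Fintype ι] [CommSemiring A] [AddCommMonoid M] [Module A M]
  {p : A} {r : ℕ}

theorem pow_pred_smul_eq_zero_of_sum_pow_smul_eq_zero (hpr : p ^ r = 0) {x : Fin r → M}
    (hx : ∑ j : Fin r, p ^ (j : ℕ) • x j = 0) (j : Fin r) (hlow : ∀ k < j, x k = 0) :
    p ^ (r - 1) • x j = 0 := by
  have hj := j.isLt
  have : p ^ (r - 1 - j) • ∑ k : Fin r, p ^ (k : ℕ) • x k = p ^ (r - 1) • x j := by
    rw [Finset.smul_sum, Finset.sum_eq_single j]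
    · rw [smul_smul, ← pow_add, Nat.sub_add_cancel (by omega)]
    · intro k _ hkj
      rcases lt_or_gt_of_ne hkj with hk | hk
      · rw [hlow k hk, smul_zero, smul_zero]
      · have hk' : r ≤ r - 1 - j + k := by rw [Fin.lt_def] at hk; omega
        rw [smul_smul, ← pow_add, pow_eq_zero_of_le hk' hpr, zero_smul]
    · simp
  rw [← this, hx, smul_zero]

variable (S : A → Prop) (u : ι → M)

theorem eq_zero_of_sum_pow_smul_sum_smul_eq_zero (hpr : p ^ r = 0)
    (hS : ∀ b : ι → A, (∀ i, S (b i)) → p ^ (r - 1) • ∑ i, b i • u i = 0 → ∀ i, b i = 0)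
    (c : ι → Fin r → A) (hc : ∀ i j, S (c i j))
    (h : ∑ j : Fin r, p ^ (j : ℕ) • ∑ i, c i j • u i = 0) (i : ι) (j : Fin r) : c i j = 0 := by
  induction j using WellFoundedLT.induction generalizing i with
  | _ j ih =>
    refine hS (c · j) (hc · j) ?_ i
    refine pow_pred_smul_eq_zero_of_sum_pow_smul_eq_zero hpr h j fun k hk => ?_
    simp [ih k hk]

theorem eq_zero_of_sum_subtype_pow_smul_eq_zero (hpr : p ^ r = 0) (hS0 : S 0)
    (hS : ∀ b : ι → A, (∀ i, S (b i)) → p ^ (r - 1) • ∑ i, b i • u i = 0 → ∀ i, b i = 0)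
    (e : ι → ℕ) (a : {q : ι × Fin r // e q.1 ≤ q.2} → A) (ha : ∀ s, S (a s))
    (h : ∑ s, a s • p ^ (s.val.2 : ℕ) • u s.val.1 = 0) (s) : a s = 0 := by
  classical
  let c : ι → Fin r → A := fun i j => if hij : e i ≤ j then a ⟨(i, j), hij⟩ else 0
  have hc : ∀ i j, S (c i j) := by
    intro i j
    dsimp only [c]
    split_ifs
    exacts [ha _, hS0]
  have hsum : ∑ j : Fin r, p ^ (j : ℕ) • ∑ i, c i j • u i = 0 := by
    rw [← h]
    calc ∑ j : Fin r, p ^ (j : ℕ) • ∑ i, c i j • u i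
        = ∑ q : ι × Fin r, c q.1 q.2 • p ^ (q.2 : ℕ) • u q.1 := by
          rw [Fintype.sum_prod_type_right]
          simp_rw [Finset.smul_sum, smul_comm (p ^ _)]
      _ = _ := by
          simp only [c, dite_smul, zero_smul]
          exact Fintype.sum_dite_zero_eq_sum_subtype _ fun s => a s • p ^ (s.val.2 : ℕ) • u s.val.1
  simpa [c, s.prop] using
    eq_zero_of_sum_pow_smul_sum_smul_eq_zero S u hpr hS c hc hsum s.val.1 s.val.2

end Layers

theorem eq_zero_of_smul_sum_eq_zero_of_linearIndependent_map {ι κ A B : Type*} [Fintype ι]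
    [CommRing A] [CommRing B] (f : A →+* B) (t : A) (S : A → Prop)
    (hker : ∀ a, t * a = 0 → f a = 0) (hS : ∀ a, S a → f a = 0 → a = 0)
    {u : ι → κ → A} (hu : LinearIndependent B fun i k => f (u i k))
    (b : ι → A) (hb : ∀ i, S (b i)) (h : t • ∑ i, b i • u i = 0) (i : ι) : b i = 0 := by
  have hfb : ∀ i, f (b i) = 0 := by
    refine Fintype.linearIndependent_iff.mp hu _ (funext fun k => ?_)
    simpa [Finset.sum_apply, map_sum] using hker _ (congrFun h k)
  exact hS _ (hb i) (hfb i)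

theorem Polynomial.linearIndependent_of_coeff {ι κ K : Type*} [Fintype ι] [CommRing K] {ν : ℕ}
    {u : ι → κ → K[X]} (hdeg : ∀ i k, (u i k).natDegree ≤ ν)
    (hu : LinearIndependent K fun i k => (u i k).coeff ν) : LinearIndependent K[X] u := by
  rw [Fintype.linearIndependent_iff]
  intro b hb
  have top_coeff : ∀ d, (∀ i, (b i).natDegree ≤ d) → ∀ i, (b i).coeff d = 0 := by
    intro d hd i
    refine Fintype.linearIndependent_iff.mp hu (fun i => (b i).coeff d) ?_ i
    funext k
    simpa [Finset.sum_apply, finsetSum_coeff, coeff_mul_add_eq_of_natDegree_le (hd _) (hdeg _ k)]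
      using congrArg (fun x => (x k).coeff (d + ν)) hb
  suffices ∀ d, (∀ i, (b i).natDegree ≤ d) → ∀ i, b i = 0 from
    this _ fun i => Finset.le_sup (f := fun i => (b i).natDegree) (Finset.mem_univ i)
  intro d
  induction d with
  | zero => intro hd i; rw [eq_C_of_natDegree_le_zero (hd i), top_coeff 0 hd i, map_zero]
  | succ d ih =>
    intro hd
    refine ih fun i => natDegree_le_iff_coeff_eq_zero.mpr fun N hN => ?_
    rcases (Nat.succ_le_of_lt hN).eq_or_lt with rfl | hN'
    · exact top_coeff _ hd i
    · exact coeff_eq_zero_of_natDegree_lt ((hd i).trans_lt hN')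

theorem ZMod.castHom_eq_zero_of_pow_pred_mul_eq_zero {p r : ℕ} (hp : p ≠ 0) (hr : 0 < r)
    {a : ZMod (p ^ r)} (h : (p : ZMod (p ^ r)) ^ (r - 1) * a = 0) :
    ZMod.castHom (dvd_pow_self p hr.ne') (ZMod p) a = 0 := by
  have : NeZero (p ^ r) := ⟨pow_ne_zero r hp⟩
  obtain ⟨k, rfl⟩ := ZMod.natCast_zmod_surjective a
  rw [← Nat.cast_pow, ← Nat.cast_mul, ZMod.natCast_eq_zero_iff] at h
  rw [map_natCast, ZMod.natCast_eq_zero_iff]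
  refine Nat.dvd_of_mul_dvd_mul_left (pow_pos (Nat.pos_of_ne_zero hp) (r - 1)) ?_
  rwa [← pow_succ, Nat.sub_add_cancel hr]

theorem ZMod.natCast_eq_zero_of_castHom_eq_zero {p r c : ℕ} (hr : 0 < r) (hc : c < p)
    (h : ZMod.castHom (dvd_pow_self p hr.ne') (ZMod p) c = 0) : (c : ZMod (p ^ r)) = 0 := by
  rw [map_natCast, ZMod.natCast_eq_zero_iff] at h
  rw [Nat.eq_zero_of_dvd_of_lt h hc, Nat.cast_zero]

theorem apPoly_zero {p r : ℕ} (hp : 0 < p) : ApPoly p r 0 :=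
  fun _ => ⟨0, hp, by simp⟩

theorem apPoly_one {p r : ℕ} (hp : 1 < p) : ApPoly p r 1 := by
  intro m
  rcases eq_or_ne m 0 with rfl | hm
  · exact ⟨1, hp, by simp⟩
  · exact ⟨0, by omega, by simp [coeff_one, hm]⟩

theorem ApPoly.eq_zero_of_map_eq_zero {p r : ℕ} (hr : 0 < r) {a : (ZMod (p ^ r))[X]}
    (ha : ApPoly p r a) (h : a.map (ZMod.castHom (dvd_pow_self p hr.ne') (ZMod p)) = 0) :
    a = 0 := by
  ext m
  obtain ⟨c, hc, hcm⟩ := ha m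
  rw [hcm, coeff_zero]
  refine ZMod.natCast_eq_zero_of_castHom_eq_zero hr hc ?_
  rw [← hcm, ← coeff_map, h, coeff_zero]

theorem ApPoly.natDegree_pow_mul {p r j : ℕ} {a : (ZMod (p ^ r))[X]} (ha : ApPoly p r a)
    (hj : j < r) : ((p : (ZMod (p ^ r))[X]) ^ j * a).natDegree = a.natDegree := by
  rcases eq_or_ne a 0 with rfl | ha0
  · simp
  obtain ⟨c, hcp, hc⟩ := ha a.natDegree
  have hc0 : c ≠ 0 := by
    rintro rfl
    exact ha0 (leadingCoeff_eq_zero.mp (by rw [leadingCoeff, hc, Nat.cast_zero]))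
  rw [← Nat.cast_pow, ← C_eq_natCast, natDegree_C_mul_of_mul_ne_zero]
  rw [leadingCoeff, hc, ← Nat.cast_mul, Ne, ZMod.natCast_eq_zero_iff,
    ← Nat.add_sub_cancel' hj.le, pow_add]
  intro hdvd
  have hpc : p ^ (r - j) ∣ c := Nat.dvd_of_mul_dvd_mul_left (pow_pos (by omega) j) hdvd
  exact hc0 (Nat.eq_zero_of_dvd_of_lt ((dvd_pow_self p (by omega)).trans hpc) hcp)

theorem rowDeg_pow_smul {p r n j : ℕ} {v : Fin n → (ZMod (p ^ r))[X]} (hv : ∀ m, ApPoly p r (v m))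
    (hj : j < r) : rowDeg n ((p : (ZMod (p ^ r))[X]) ^ j • v) = rowDeg n v :=
  Finset.sup_congr rfl fun m _ => (hv m).natDegree_pow_mul hj

theorem natCast_pow_eq_zero_of_charP {A : Type*} [Semiring A] (p r : ℕ) [CharP A (p ^ r)] :
    (p : A) ^ r = 0 := by
  rw [← Nat.cast_pow, CharP.cast_eq_zero]

section LiftedRows

variable {p r n ν : ℕ} {ι : Type*} [Fintype ι] (e : ι → ℕ) (v : ι → Fin n → (ZMod (p ^ r))[X])

theorem exists_later_apPoly_combination_eq_p_smul [LT ι] (hp : 1 < p)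
    (q : {q : ι × Fin r // e q.1 ≤ q.2}) :
    ∃ a : {q : ι × Fin r // e q.1 ≤ q.2} → (ZMod (p ^ r))[X],
      (∀ s, ApPoly p r (a s)) ∧
      (∀ s, ¬ (q.val.1 < s.val.1 ∨ (q.val.1 = s.val.1 ∧ q.val.2 < s.val.2)) → a s = 0) ∧
      (p : (ZMod (p ^ r))[X]) • (p : (ZMod (p ^ r))[X]) ^ (q.val.2 : ℕ) • v q.val.1 =
        ∑ s, a s • (p : (ZMod (p ^ r))[X]) ^ (s.val.2 : ℕ) • v s.val.1 := by
  classical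
  obtain ⟨⟨i, j⟩, hij⟩ := q
  rw [smul_smul, ← pow_succ']
  by_cases hj : (j : ℕ) + 1 < r
  · let s₀ : {q : ι × Fin r // e q.1 ≤ q.2} := ⟨(i, ⟨j + 1, hj⟩), hij.trans (Nat.le_succ _)⟩
    refine ⟨fun s => if s = s₀ then 1 else 0, fun s => ?_, fun s hs => if_neg ?_, ?_⟩
    · dsimp only
      split_ifs
      exacts [apPoly_one hp, apPoly_zero (by omega)]
    · rintro rfl
      exact hs (Or.inr ⟨rfl, Nat.lt_succ_self _⟩)
    · simp [ite_smul, s₀]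
  · refine ⟨0, fun _ => apPoly_zero (by omega), fun _ _ => rfl, ?_⟩
    have hpj : (p : (ZMod (p ^ r))[X]) ^ ((j : ℕ) + 1) = 0 :=
      pow_eq_zero_of_le (by omega) (natCast_pow_eq_zero_of_charP p r)
    simp [hpj]

theorem eq_zero_of_sum_smul_pow_smul_eq_zero (hp : p ≠ 0) (hr : 0 < r)
    (hdeg : ∀ i m, (v i m).natDegree ≤ ν)
    (hred : LinearIndependent (ZMod p) fun i m =>
      ZMod.castHom (dvd_pow_self p hr.ne') (ZMod p) ((v i m).coeff ν))
    (a : {q : ι × Fin r // e q.1 ≤ q.2} → (ZMod (p ^ r))[X]) (ha : ∀ s, ApPoly p r (a s))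
    (h : ∑ s, a s • (p : (ZMod (p ^ r))[X]) ^ (s.val.2 : ℕ) • v s.val.1 = 0) (s) : a s = 0 := by
  set π := ZMod.castHom (dvd_pow_self p hr.ne') (ZMod p)
  have hker : ∀ a : (ZMod (p ^ r))[X], (p : (ZMod (p ^ r))[X]) ^ (r - 1) * a = 0 →
      mapRingHom π a = 0 := by
    intro a ha
    ext k
    have hk := congrArg (coeff · k) ha
    simp only [← Nat.cast_pow, coeff_natCast_mul, coeff_zero] at hk
    rw [coe_mapRingHom, coeff_map, coeff_zero]
    exact ZMod.castHom_eq_zero_of_pow_pred_mul_eq_zero hp hr (by rwa [Nat.cast_pow] at hk)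
  have hli : LinearIndependent (ZMod p)[X] fun i m => mapRingHom π (v i m) :=
    linearIndependent_of_coeff (fun i m => natDegree_map_le.trans (hdeg i m))
      (by simpa [coeff_map] using hred)
  exact eq_zero_of_sum_subtype_pow_smul_eq_zero (ApPoly p r) v
    (natCast_pow_eq_zero_of_charP p r) (apPoly_zero (Nat.pos_of_ne_zero hp))
    (fun b hb => eq_zero_of_smul_sum_eq_zero_of_linearIndependent_map (mapRingHom π) _ _ hker
      (fun a ha => ha.eq_zero_of_map_eq_zero hr) hli b hb) e a ha h s

theorem eq_zero_of_sum_smul_coeff_pow_smul_eq_zero (hp : p ≠ 0) (hr : 0 < r)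
    (hred : LinearIndependent (ZMod p) fun i m =>
      ZMod.castHom (dvd_pow_self p hr.ne') (ZMod p) ((v i m).coeff ν))
    (a : {q : ι × Fin r // e q.1 ≤ q.2} → ℕ) (ha : ∀ s, a s < p)
    (h : ∑ s, (a s : ZMod (p ^ r)) • (fun m =>
      (((p : (ZMod (p ^ r))[X]) ^ (s.val.2 : ℕ) • v s.val.1) m).coeff ν) = 0) (s) : a s = 0 := by
  set π := ZMod.castHom (dvd_pow_self p hr.ne') (ZMod p)
  have hS : ∀ x : ZMod (p ^ r), (∃ c < p, x = c) → π x = 0 → x = 0 := by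
    rintro _ ⟨c, hc, rfl⟩
    exact ZMod.natCast_eq_zero_of_castHom_eq_zero hr hc
  have hsum : ∑ s, (a s : ZMod (p ^ r)) • (p : ZMod (p ^ r)) ^ (s.val.2 : ℕ) •
      (fun m => (v s.val.1 m).coeff ν) = 0 := by
    rw [← h]
    congr! 3 with s m
    simp only [Pi.smul_apply, smul_eq_mul, ← Nat.cast_pow, coeff_natCast_mul]
  have has := eq_zero_of_sum_subtype_pow_smul_eq_zero (fun x : ZMod (p ^ r) => ∃ c < p, x = c)
    (fun i m => (v i m).coeff ν) (natCast_pow_eq_zero_of_charP p r)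
    ⟨0, Nat.pos_of_ne_zero hp, Nat.cast_zero.symm⟩
    (fun b hb => eq_zero_of_smul_sum_eq_zero_of_linearIndependent_map π _ _
      (fun _ => ZMod.castHom_eq_zero_of_pow_pred_mul_eq_zero hp hr) hS hred b hb)
    e (fun s => (a s : ZMod (p ^ r))) (fun s => ⟨a s, ha s, rfl⟩) hsum s
  rw [ZMod.natCast_eq_zero_iff] at has
  exact Nat.eq_zero_of_dvd_of_lt has ((ha s).trans_le (Nat.le_self_pow hr.ne' p))

end LiftedRows

theorem lifted_p_encoder_general (p r n kt ν : ℕ) (hp : p.Prime) (hr : 0 < r)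
    (v : Fin kt → (Fin n → Polynomial (ZMod (p ^ r))))
    (e : Fin kt → ℕ)
    (hAp : ∀ i m, ApPoly p r (v i m))
    (hdeg : ∀ i, rowDeg n (v i) = ν)
    (hred : LinearIndependent (ZMod p)
      (fun i : Fin kt => fun m : Fin n =>
        (ZMod.castHom (dvd_pow_self p hr.ne') (ZMod p)) ((v i m).coeff ν))) :
    ∀ w : {q : Fin kt × Fin r // e q.1 ≤ (q.2 : ℕ)} → (Fin n → Polynomial (ZMod (p ^ r))),
      (w = fun q => ((p : Polynomial (ZMod (p ^ r))) ^ (q.val.2 : ℕ)) • v q.val.1) →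
      -- (a) the rows of the lifted matrix form a p-generator sequence for the lex order
      ((∀ q, ∃ a : {q : Fin kt × Fin r // e q.1 ≤ (q.2 : ℕ)} → Polynomial (ZMod (p ^ r)),
          (∀ s, ApPoly p r (a s)) ∧
          (∀ s, ¬ (q.val.1 < s.val.1 ∨ (q.val.1 = s.val.1 ∧ q.val.2 < s.val.2)) → a s = 0) ∧
          (p : Polynomial (ZMod (p ^ r))) • w q = ∑ s, a s • w s) ∧
      -- (b) the rows are p-linearly independent over A_p[D]
      (∀ a : {q : Fin kt × Fin r // e q.1 ≤ (q.2 : ℕ)} → Polynomial (ZMod (p ^ r)),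
          (∀ s, ApPoly p r (a s)) → ∑ s, a s • w s = 0 → ∀ s, a s = 0) ∧
      -- (c) the leading coefficient vectors are p-linearly independent over Z_{p^r}
      (∀ a : {q : Fin kt × Fin r // e q.1 ≤ (q.2 : ℕ)} → ℕ, (∀ s, a s < p) →
          ∑ s, (a s : ZMod (p ^ r)) • (fun m : Fin n => (w s m).coeff ν) = 0 →
          ∀ s, a s = 0) ∧
      -- (d) all row degrees equal ν
      (∀ q, rowDeg n (w q) = ν)) := by
  rintro w rfl
  have hvdeg : ∀ i m, (v i m).natDegree ≤ ν := fun i m =>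
    hdeg i ▸ Finset.le_sup (f := fun m => (v i m).natDegree) (Finset.mem_univ m)
  exact ⟨exists_later_apPoly_combination_eq_p_smul e v hp.one_lt,
    eq_zero_of_sum_smul_pow_smul_eq_zero e v hp.ne_zero hr hvdeg hred,
    eq_zero_of_sum_smul_coeff_pow_smul_eq_zero e v hp.ne_zero hr hred,
    fun q => (rowDeg_pow_smul (hAp _) q.val.2.isLt).trans (hdeg _)⟩

/-- Lemma 4.1: let `G̃(D) ∈ Z_p[D]^{k̃ × n}` be lifted to `Z_{p^r}[D]` (all entries have
coefficients in `A_p = {0,...,p-1}`), with all row degrees equal to `ν` and in reduced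
form (the leading coefficient matrix has full row rank over `Z_p`). Let `e i < r` be the
block index of row `i`, and let `G(D)` be the lifted matrix whose rows are
`p^j • G̃_i(D)` for `e i ≤ j ≤ r - 1`, ordered lexicographically (within a block by
increasing power `j`, as in eq. (2) of the paper). Then `G(D)` is a `p`-encoder in
reduced form: its rows form a `p`-generator sequence (w.r.t. this order), are
`p`-linearly independent over `A_p[D]`, their leading coefficient vectors are
`p`-linearly independent over `Z_{p^r}`, and all its row degrees equal `ν`. -/
theorem lifted_p_encoder (p r n kt ν : ℕ) (hp : p.Prime) (hr : 0 < r)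
    (v : Fin kt → (Fin n → Polynomial (ZMod (p ^ r))))
    (e : Fin kt → ℕ) (he : ∀ i, e i < r)
    (hAp : ∀ i m, ApPoly p r (v i m))
    (hdeg : ∀ i, rowDeg n (v i) = ν)
    (hred : LinearIndependent (ZMod p)
      (fun i : Fin kt => fun m : Fin n =>
        (ZMod.castHom (dvd_pow_self p hr.ne') (ZMod p)) ((v i m).coeff ν))) :
    ∀ w : {q : Fin kt × Fin r // e q.1 ≤ (q.2 : ℕ)} → (Fin n → Polynomial (ZMod (p ^ r))),
      (w = fun q => ((p : Polynomial (ZMod (p ^ r))) ^ (q.val.2 : ℕ)) • v q.val.1) →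
      -- (a) the rows of the lifted matrix form a p-generator sequence for the lex order
      ((∀ q, ∃ a : {q : Fin kt × Fin r // e q.1 ≤ (q.2 : ℕ)} → Polynomial (ZMod (p ^ r)),
          (∀ s, ApPoly p r (a s)) ∧
          (∀ s, ¬ (q.val.1 < s.val.1 ∨ (q.val.1 = s.val.1 ∧ q.val.2 < s.val.2)) → a s = 0) ∧
          (p : Polynomial (ZMod (p ^ r))) • w q = ∑ s, a s • w s) ∧
      -- (b) the rows are p-linearly independent over A_p[D]
      (∀ a : {q : Fin kt × Fin r // e q.1 ≤ (q.2 : ℕ)} → Polynomial (ZMod (p ^ r)),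
          (∀ s, ApPoly p r (a s)) → ∑ s, a s • w s = 0 → ∀ s, a s = 0) ∧
      -- (c) the leading coefficient vectors are p-linearly independent over Z_{p^r}
      (∀ a : {q : Fin kt × Fin r // e q.1 ≤ (q.2 : ℕ)} → ℕ, (∀ s, a s < p) →
          ∑ s, (a s : ZMod (p ^ r)) • (fun m : Fin n => (w s m).coeff ν) = 0 →
          ∀ s, a s = 0) ∧
      -- (d) all row degrees equal ν
      (∀ q, rowDeg n (w q) = ν)) :=
  lifted_p_encoder_general p r n kt ν hp hr v e hAp hdeg hred
end
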